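/- arXiv:1601.03242 — 2 statements merged into one kernel-verified Lean document; each statement's English description precedes it below -/
import Mathlib

section
/- Let g(z) = c |z|^{-1-α} e^{-β|z|} with c, β > 0 and α ∈ (0,1). Then for every y ∈ ℝ with y ≠ 0, liminf as ε → 0+ of ε^α ∫_{ℝ∖{0}} (|z y/ε|² ∧ 1) g(z) dz > 0. -/
open MeasureTheory Set Real Filter

set_option maxHeartbeats 1000000


/-- Order and non-degeneracy condition for the symmetric tempered stable Lévy density
`g(z) = c|z|^{-1-α} e^{-β|z|}`, `α ∈ (0,1)`: for every `y ≠ 0`,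
`liminf_{ε → 0+} ε^α ∫_{ℝ∖{0}} (|z y/ε|² ∧ 1) g(z) dz > 0`. -/
theorem stmt_4 (c β α : ℝ) (hc : 0 < c) (hβ : 0 < β) (hα : 0 < α) (hα1 : α < 1)
    (g : ℝ → ℝ) (hg : ∀ z : ℝ, z ≠ 0 → g z = c * |z| ^ (-(1 + α)) * Real.exp (-β * |z|)) :
    ∀ y : ℝ, y ≠ 0 →
      0 < Filter.liminf
        (fun ε : ℝ => ε ^ α * ∫ z in ({0}ᶜ : Set ℝ), min (|z * y / ε| ^ 2) 1 * g z)
        (nhdsWithin 0 (Set.Ioi 0)) := by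
  classical
  intro y hy
  set a : ℝ := |y| with ha
  have ha0 : 0 < a := abs_pos.mpr hy
  set ε₀ : ℝ := a * (2:ℝ) ^ (-α⁻¹) with hε₀def
  have hε₀ : 0 < ε₀ := by positivity
  set K : ℝ := c * Real.exp (-β) / α * (a ^ α / 2) with hKdef
  have hK : 0 < K := by positivity
  set B : ℝ := 2 * (c * a ^ α / (2 - α) + c * a ^ α / α) with hBdef
  have key : ∀ ε ∈ Set.Ioo (0:ℝ) ε₀,
      K ≤ ε ^ α * ∫ z in ({0}ᶜ : Set ℝ), min (|z * y / ε| ^ 2) 1 * g z ∧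
      ε ^ α * (∫ z in ({0}ᶜ : Set ℝ), min (|z * y / ε| ^ 2) 1 * g z) ≤ B := by
    rintro ε ⟨hε, hεε₀⟩
    set f : ℝ → ℝ :=
      fun t => min (|t * y / ε| ^ 2) 1 * (c * |t| ^ (-(1 + α)) * Real.exp (-β * |t|)) with hf
    -- reduce the two-sided integral to an integral on (0, ∞)
    have step0 : ∫ z in ({0}ᶜ : Set ℝ), min (|z * y / ε| ^ 2) 1 * g z
        = 2 * ∫ t in Set.Ioi (0:ℝ), f t := by
      rw [MeasureTheory.restrict_compl_singleton]
      have h1 : (fun z : ℝ => min (|z * y / ε| ^ 2) 1 * g z) =ᵐ[volume]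
          (fun z : ℝ => f |z|) := by
        filter_upwards [(Set.countable_singleton (0:ℝ)).ae_notMem volume] with z hz
        simp only [Set.mem_singleton_iff] at hz
        rw [hg z hz]
        simp [hf, abs_mul, abs_div, abs_abs]
      rw [MeasureTheory.integral_congr_ae h1, integral_comp_abs (f := f)]
    have hm : Measurable f := by fun_prop
    have hf0 : ∀ t, 0 ≤ f t := by
      intro t
      apply mul_nonneg (le_min (by positivity) zero_le_one) (by positivity)
    have hfb1 : ∀ t : ℝ, 0 < t → f t ≤ (a / ε) ^ 2 * c * t ^ (1 - α) := by
      intro t ht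
      have h1 : min (|t * y / ε| ^ 2) 1 ≤ (t * (a / ε)) ^ 2 := by
        refine le_trans (min_le_left _ _) (le_of_eq ?_)
        rw [abs_div, abs_mul, abs_of_pos ht, abs_of_pos hε]
        ring
      have h2 : c * |t| ^ (-(1 + α)) * Real.exp (-β * |t|) ≤ c * t ^ (-(1 + α)) := by
        rw [abs_of_pos ht]
        exact mul_le_of_le_one_right (by positivity)
          (Real.exp_le_one_iff.mpr (by nlinarith : -β * t ≤ 0))
      have h3 : (t * (a / ε)) ^ 2 * (c * t ^ (-(1 + α))) = (a / ε) ^ 2 * c * t ^ (1 - α) := by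
        have ht2 : (t:ℝ) ^ (2:ℕ) * t ^ (-(1 + α)) = t ^ (1 - α) := by
          rw [← Real.rpow_natCast t 2, ← Real.rpow_add ht]
          congr 1 <;> push_cast <;> ring_nf
        calc (t * (a / ε)) ^ 2 * (c * t ^ (-(1 + α)))
            = (a / ε) ^ 2 * c * ((t:ℝ) ^ (2:ℕ) * t ^ (-(1 + α))) := by ring
          _ = (a / ε) ^ 2 * c * t ^ (1 - α) := by rw [ht2]
      calc f t ≤ (t * (a / ε)) ^ 2 * (c * t ^ (-(1 + α))) := by
            apply mul_le_mul h1 h2 (by positivity) (by positivity)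
        _ = _ := h3
    have hfb2 : ∀ t : ℝ, 0 < t → f t ≤ c * t ^ (-(1 + α)) := by
      intro t ht
      have h2 : c * |t| ^ (-(1 + α)) * Real.exp (-β * |t|) ≤ c * t ^ (-(1 + α)) := by
        rw [abs_of_pos ht]
        exact mul_le_of_le_one_right (by positivity)
          (Real.exp_le_one_iff.mpr (by nlinarith : -β * t ≤ 0))
      calc f t ≤ 1 * (c * |t| ^ (-(1 + α)) * Real.exp (-β * |t|)) := by
            apply mul_le_mul_of_nonneg_right (min_le_right _ _) (by positivity)
        _ ≤ c * t ^ (-(1 + α)) := by rw [one_mul]; exact h2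
    have hfb3 : ∀ t : ℝ, 1 ≤ t → f t ≤ c * Real.exp (-β * t) := by
      intro t ht
      have h1 : |t| ^ (-(1 + α)) ≤ 1 := by
        rw [abs_of_pos (lt_of_lt_of_le one_pos ht)]
        exact Real.rpow_le_one_of_one_le_of_nonpos ht (by linarith)
      have h2 : (0:ℝ) < Real.exp (-β * t) := Real.exp_pos _
      calc f t ≤ 1 * (c * |t| ^ (-(1 + α)) * Real.exp (-β * |t|)) := by
            apply mul_le_mul_of_nonneg_right (min_le_right _ _) (by positivity)
        _ = c * |t| ^ (-(1 + α)) * Real.exp (-β * t) := by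
            rw [one_mul, abs_of_pos (lt_of_lt_of_le one_pos ht)]
        _ ≤ c * 1 * Real.exp (-β * t) :=
            mul_le_mul_of_nonneg_right (mul_le_mul_of_nonneg_left h1 hc.le) h2.le
        _ = c * Real.exp (-β * t) := by ring
    -- integrability on (0, ∞)
    have hint1 : MeasureTheory.IntegrableOn f (Set.Ioc 0 1) := by
      have hd : MeasureTheory.IntegrableOn
          (fun t : ℝ => (a / ε) ^ 2 * c * t ^ (1 - α)) (Set.Ioc 0 1) := by
        apply MeasureTheory.Integrable.const_mul
        have := intervalIntegral.intervalIntegrable_rpow' (a := 0) (b := 1)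
          (show (-1:ℝ) < 1 - α by linarith)
        rwa [intervalIntegrable_iff_integrableOn_Ioc_of_le zero_le_one] at this
      apply hd.mono' hm.aestronglyMeasurable.restrict
      filter_upwards [MeasureTheory.ae_restrict_mem measurableSet_Ioc] with t ht
      rw [Real.norm_eq_abs, abs_of_nonneg (hf0 t)]
      exact hfb1 t ht.1
    have hint2 : MeasureTheory.IntegrableOn f (Set.Ioi 1) := by
      have hd : MeasureTheory.IntegrableOn (fun t : ℝ => c * Real.exp (-β * t)) (Set.Ioi 1) :=
        (exp_neg_integrableOn_Ioi 1 hβ).const_mul c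
      apply hd.mono' hm.aestronglyMeasurable.restrict
      filter_upwards [MeasureTheory.ae_restrict_mem measurableSet_Ioi] with t ht
      rw [Real.norm_eq_abs, abs_of_nonneg (hf0 t)]
      exact hfb3 t (le_of_lt ht)
    have hInt : MeasureTheory.IntegrableOn f (Set.Ioi 0) := by
      rw [← Set.Ioc_union_Ioi_eq_Ioi (zero_le_one (α := ℝ))]
      exact hint1.union hint2
    set I : ℝ := ∫ t in Set.Ioi (0:ℝ), f t with hI
    have hI0 : 0 ≤ I := MeasureTheory.setIntegral_nonneg measurableSet_Ioi fun t _ => hf0 t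
    -- the scale r
    set r : ℝ := ε / a with hrdef
    have hr0 : 0 < r := by positivity
    have hr1 : r < 1 := by
      have h2 : (2:ℝ) ^ (-α⁻¹) < 1 :=
        Real.rpow_lt_one_of_one_lt_of_neg one_lt_two (neg_lt_zero.mpr (inv_pos.mpr hα))
      have h3 : r < ε₀ / a := by rw [hrdef]; gcongr
      have h4 : ε₀ / a = (2:ℝ) ^ (-α⁻¹) := by
        rw [hε₀def, mul_comm, mul_div_assoc, div_self ha0.ne', mul_one]
      rw [h4] at h3; linarith
    -- rpow algebra
    have hra : ε ^ α * r ^ (-α) = a ^ α := by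
      rw [Real.rpow_neg hr0.le, hrdef, Real.div_rpow hε.le ha0.le, inv_div]
      rw [mul_div_assoc']
      rw [mul_comm, mul_div_assoc, div_self (Real.rpow_pos_of_pos hε α).ne', mul_one]
    have hεa : ε ^ α ≤ a ^ α / 2 := by
      have h1 : ε ^ α ≤ ε₀ ^ α := Real.rpow_le_rpow hε.le hεε₀.le hα.le
      have h2 : ε₀ ^ α = a ^ α / 2 := by
        rw [hε₀def, Real.mul_rpow ha0.le (by positivity),
          ← Real.rpow_mul (by norm_num : (0:ℝ) ≤ 2)]
        rw [show -α⁻¹ * α = -1 by field_simp, Real.rpow_neg_one]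
        ring
      linarith
    -- lower bound for I
    have hsub : Set.Ioc r 1 ⊆ Set.Ioi (0:ℝ) := fun x hx => lt_trans hr0 hx.1
    have h0uIcc : (0:ℝ) ∉ Set.uIcc r 1 := by
      rw [Set.uIcc_of_le hr1.le]
      exact fun h => absurd h.1 (not_le.mpr hr0)
    have hne : -(1 + α) ≠ (-1 : ℝ) := by intro h; rw [neg_inj] at h; linarith
    have hlowint : MeasureTheory.IntegrableOn (fun t : ℝ => t ^ (-(1 + α))) (Set.Ioc r 1) := by
      have := intervalIntegral.intervalIntegrable_rpow (μ := MeasureTheory.volume)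
        (a := r) (b := 1) (r := -(1 + α)) (Or.inr h0uIcc)
      rwa [intervalIntegrable_iff_integrableOn_Ioc_of_le hr1.le] at this
    have hlowval : ∫ t in Set.Ioc r 1, t ^ (-(1 + α)) = (r ^ (-α) - 1) / α := by
      rw [← intervalIntegral.integral_of_le hr1.le,
        integral_rpow (Or.inr ⟨hne, h0uIcc⟩)]
      rw [show -(1 + α) + 1 = -α by ring, Real.one_rpow]
      rw [div_eq_div_iff (by exact neg_ne_zero.mpr hα.ne') (hα.ne')]
      ring
    have hIlb : c * Real.exp (-β) * ((r ^ (-α) - 1) / α) ≤ I := by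
      have hpt : ∀ t ∈ Set.Ioc r 1,
          c * Real.exp (-β) * t ^ (-(1 + α)) ≤ f t := by
        rintro t ⟨ht1, ht2⟩
        have ht0 : 0 < t := hr0.trans ht1
        have habs : 1 < |t * y / ε| := by
          rw [abs_div, abs_mul, abs_of_pos ht0, abs_of_pos hε, ← ha]
          rw [lt_div_iff₀ hε]
          have : ε / a < t := ht1
          calc 1 * ε = ε := one_mul ε
            _ < t * a := by rw [← div_lt_iff₀ ha0]; exact this
        have hmin : min (|t * y / ε| ^ 2) 1 = 1 :=
          min_eq_right (by nlinarith : (1:ℝ) ≤ |t * y / ε| ^ 2)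
        have hft : f t = c * t ^ (-(1 + α)) * Real.exp (-β * t) := by
          simp only [hf]
          rw [hmin, one_mul, abs_of_pos ht0]
        rw [hft]
        have he : Real.exp (-β) ≤ Real.exp (-β * t) :=
          Real.exp_le_exp.mpr (by nlinarith)
        nlinarith [mul_nonneg (mul_nonneg hc.le (Real.rpow_nonneg ht0.le (-(1 + α))))
          (sub_nonneg.mpr he)]
      calc c * Real.exp (-β) * ((r ^ (-α) - 1) / α)
          = ∫ t in Set.Ioc r 1, c * Real.exp (-β) * t ^ (-(1 + α)) := by
            rw [MeasureTheory.integral_const_mul, hlowval]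
        _ ≤ ∫ t in Set.Ioc r 1, f t :=
            MeasureTheory.setIntegral_mono_on (hlowint.const_mul _)
              (hInt.mono_set hsub) measurableSet_Ioc hpt
        _ ≤ I := MeasureTheory.setIntegral_mono_set hInt
              (MeasureTheory.ae_of_all _ hf0) (HasSubset.Subset.eventuallyLE hsub)
    -- upper bound for I
    have hup1val : ∫ t in Set.Ioc 0 r, t ^ (1 - α) = r ^ (2 - α) / (2 - α) := by
      rw [← intervalIntegral.integral_of_le hr0.le,
        integral_rpow (Or.inl (by linarith : (-1:ℝ) < 1 - α))]
      rw [show (1 - α + 1 : ℝ) = 2 - α by ring,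
        Real.zero_rpow (ne_of_gt (by linarith : (0:ℝ) < 2 - α)), sub_zero]
    have hup1 : ∫ t in Set.Ioc 0 r, f t ≤ (a / ε) ^ 2 * c * (r ^ (2 - α) / (2 - α)) := by
      have hd : MeasureTheory.IntegrableOn
          (fun t : ℝ => (a / ε) ^ 2 * c * t ^ (1 - α)) (Set.Ioc 0 r) := by
        apply MeasureTheory.Integrable.const_mul
        have := intervalIntegral.intervalIntegrable_rpow' (a := 0) (b := r)
          (show (-1:ℝ) < 1 - α by linarith)
        rwa [intervalIntegrable_iff_integrableOn_Ioc_of_le hr0.le] at this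
      calc ∫ t in Set.Ioc 0 r, f t
          ≤ ∫ t in Set.Ioc 0 r, (a / ε) ^ 2 * c * t ^ (1 - α) :=
            MeasureTheory.setIntegral_mono_on (hInt.mono_set Set.Ioc_subset_Ioi_self) hd
              measurableSet_Ioc (fun t ht => hfb1 t ht.1)
        _ = (a / ε) ^ 2 * c * (r ^ (2 - α) / (2 - α)) := by
            rw [MeasureTheory.integral_const_mul, hup1val]
    have hup2 : ∫ t in Set.Ioi r, f t ≤ c * (r ^ (-α) / α) := by
      calc ∫ t in Set.Ioi r, f t
          ≤ ∫ t in Set.Ioi r, c * t ^ (-(1 + α)) :=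
            MeasureTheory.setIntegral_mono_on (hInt.mono_set (Set.Ioi_subset_Ioi hr0.le))
              ((integrableOn_Ioi_rpow_of_lt (by linarith) hr0).const_mul c)
              measurableSet_Ioi (fun t ht => hfb2 t (hr0.trans ht))
        _ = c * (r ^ (-α) / α) := by
            rw [MeasureTheory.integral_const_mul,
              integral_Ioi_rpow_of_lt (by linarith : -(1 + α) < -1) hr0]
            rw [show -(1 + α) + 1 = -α by ring, neg_div_neg_eq]
    have hsplit : I = (∫ t in Set.Ioc 0 r, f t) + ∫ t in Set.Ioi r, f t := by
      rw [hI, ← Set.Ioc_union_Ioi_eq_Ioi hr0.le,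
        MeasureTheory.setIntegral_union (Set.Ioc_disjoint_Ioi le_rfl) measurableSet_Ioi
          (hInt.mono_set Set.Ioc_subset_Ioi_self) (hInt.mono_set (Set.Ioi_subset_Ioi hr0.le))]
    have hIub : I ≤ (a / ε) ^ 2 * c * (r ^ (2 - α) / (2 - α)) + c * (r ^ (-α) / α) := by
      rw [hsplit]; exact add_le_add hup1 hup2
    -- final rpow algebra
    have h2α : r ^ (2 - α) = (r:ℝ) ^ (2:ℕ) * r ^ (-α) := by
      rw [← Real.rpow_natCast r 2, ← Real.rpow_add hr0]
      congr 1 <;> push_cast <;> ring_nf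
    have hcancel : (a / ε) ^ (2:ℕ) * (r:ℝ) ^ (2:ℕ) = 1 := by
      rw [hrdef]; field_simp
    have hA : ε ^ α * ((a / ε) ^ 2 * r ^ (2 - α)) = a ^ α := by
      rw [h2α]
      calc ε ^ α * ((a / ε) ^ 2 * ((r:ℝ) ^ (2:ℕ) * r ^ (-α)))
          = ((a / ε) ^ (2:ℕ) * (r:ℝ) ^ (2:ℕ)) * (ε ^ α * r ^ (-α)) := by ring
        _ = 1 * a ^ α := by rw [hcancel, hra]
        _ = a ^ α := one_mul _
    have e1 : ε ^ α * ((a / ε) ^ 2 * c * (r ^ (2 - α) / (2 - α))) = c * a ^ α / (2 - α) := by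
      calc ε ^ α * ((a / ε) ^ 2 * c * (r ^ (2 - α) / (2 - α)))
          = c / (2 - α) * (ε ^ α * ((a / ε) ^ 2 * r ^ (2 - α))) := by ring
        _ = c / (2 - α) * a ^ α := by rw [hA]
        _ = c * a ^ α / (2 - α) := by ring
    have e2 : ε ^ α * (c * (r ^ (-α) / α)) = c * a ^ α / α := by
      calc ε ^ α * (c * (r ^ (-α) / α)) = c / α * (ε ^ α * r ^ (-α)) := by ring
        _ = c / α * a ^ α := by rw [hra]
        _ = c * a ^ α / α := by ring
    have hεp : (0:ℝ) < ε ^ α := Real.rpow_pos_of_pos hε α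
    constructor
    · rw [step0]
      have h5 : ε ^ α * (c * Real.exp (-β) * ((r ^ (-α) - 1) / α))
          = c * Real.exp (-β) / α * (ε ^ α * r ^ (-α) - ε ^ α) := by ring
      calc K = c * Real.exp (-β) / α * (a ^ α - a ^ α / 2) := by rw [hKdef]; ring
        _ ≤ c * Real.exp (-β) / α * (a ^ α - ε ^ α) := by
            have hpos : (0:ℝ) < c * Real.exp (-β) / α := by positivity
            nlinarith
        _ = ε ^ α * (c * Real.exp (-β) * ((r ^ (-α) - 1) / α)) := by rw [h5, hra]
        _ ≤ ε ^ α * I := mul_le_mul_of_nonneg_left hIlb hεp.le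
        _ ≤ ε ^ α * (2 * I) := by nlinarith
    · rw [step0]
      calc ε ^ α * (2 * I)
          ≤ ε ^ α * (2 * ((a / ε) ^ 2 * c * (r ^ (2 - α) / (2 - α)) + c * (r ^ (-α) / α))) := by
            apply mul_le_mul_of_nonneg_left _ hεp.le
            linarith
        _ = 2 * (ε ^ α * ((a / ε) ^ 2 * c * (r ^ (2 - α) / (2 - α)))
              + ε ^ α * (c * (r ^ (-α) / α))) := by ring
        _ = 2 * (c * a ^ α / (2 - α) + c * a ^ α / α) := by rw [e1, e2]
        _ = B := by rw [hBdef]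
  have hmem : Set.Ioo (0:ℝ) ε₀ ∈ nhdsWithin (0:ℝ) (Set.Ioi 0) :=
    Ioo_mem_nhdsGT_of_mem ⟨le_refl 0, hε₀⟩
  refine lt_of_lt_of_le hK (Filter.le_liminf_of_le ?_ ?_)
  · exact Filter.isCoboundedUnder_ge_of_eventually_le _ (x := B)
      (Filter.eventually_of_mem hmem fun ε hε => (key ε hε).2)
  · exact Filter.eventually_of_mem hmem fun ε hε => (key ε hε).1
end

section
/- Let H = {u ∈ (ℝ²)^∞ : ∑|u_n|² < ∞} with its natural inner product, and let B be the SABRA bilinear map with coefficients a, b ∈ ℝ and wave numbers k_n = k₀λⁿ, λ > 1. Then there is C₁ > 0 such that |B(u,v)| ≤ C₁ ‖u‖ |v| for all u ∈ V, v ∈ H, where ‖u‖² = ∑ k_n² |u_n|². -/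
private lemma four_sq_aux (x1 x2 x3 x4 : ℝ) :
    (x1 + x2 + x3 + x4) ^ 2 ≤ 4 * (x1 ^ 2 + x2 ^ 2 + x3 ^ 2 + x4 ^ 2) := by
  nlinarith [sq_nonneg (x1 - x2), sq_nonneg (x1 - x3), sq_nonneg (x1 - x4),
    sq_nonneg (x2 - x3), sq_nonneg (x2 - x4), sq_nonneg (x3 - x4)]

/-- Continuity estimate `|B(u,v)| ≤ C₁ ‖u‖ |v|` (Assumption B(b)) for the SABRA shell
model bilinear map, with `‖u‖² = ∑_{n≥1} k_n² |u_n|²`, `|v|² = ∑_{n≥1} |v_n|²`,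
`k_n = k₀ λⁿ` and `u_n = v_n = 0` for `n ≤ 0`. -/
theorem stmt_18 (a b k₀ lam : ℝ) (hlam : 1 < lam) (hk₀ : 0 < k₀)
    (k : ℤ → ℝ) (hk : ∀ n : ℤ, k n = k₀ * lam ^ n) :
    ∃ C₁ > 0, ∀ u v : ℤ → ℂ,
      (∀ n : ℤ, n ≤ 0 → u n = 0) → (∀ n : ℤ, n ≤ 0 → v n = 0) →
      Summable (fun n : ℕ => k ((n : ℤ) + 1) ^ 2 * ‖u ((n : ℤ) + 1)‖ ^ 2) →
      Summable (fun n : ℕ => ‖v ((n : ℤ) + 1)‖ ^ 2) →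
      (Summable (fun n : ℕ =>
        ‖-Complex.I *
            (((a * k ((n : ℤ) + 2) : ℝ) : ℂ) * (starRingEnd ℂ) (u ((n : ℤ) + 2)) * v ((n : ℤ) + 3) +
             ((b * k ((n : ℤ) + 1) : ℝ) : ℂ) * (starRingEnd ℂ) (u (n : ℤ)) * v ((n : ℤ) + 2) +
             ((a * k (n : ℤ) : ℝ) : ℂ) * u (n : ℤ) * v ((n : ℤ) - 1) +
             ((b * k (n : ℤ) : ℝ) : ℂ) * u ((n : ℤ) - 1) * v (n : ℤ))‖ ^ 2) ∧
      (∑' n : ℕ,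
        ‖-Complex.I *
            (((a * k ((n : ℤ) + 2) : ℝ) : ℂ) * (starRingEnd ℂ) (u ((n : ℤ) + 2)) * v ((n : ℤ) + 3) +
             ((b * k ((n : ℤ) + 1) : ℝ) : ℂ) * (starRingEnd ℂ) (u (n : ℤ)) * v ((n : ℤ) + 2) +
             ((a * k (n : ℤ) : ℝ) : ℂ) * u (n : ℤ) * v ((n : ℤ) - 1) +
             ((b * k (n : ℤ) : ℝ) : ℂ) * u ((n : ℤ) - 1) * v (n : ℤ))‖ ^ 2) ≤
        C₁ ^ 2 * (∑' n : ℕ, k ((n : ℤ) + 1) ^ 2 * ‖u ((n : ℤ) + 1)‖ ^ 2) *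
          ∑' n : ℕ, ‖v ((n : ℤ) + 1)‖ ^ 2) := by
  have hlam0 : (0:ℝ) < lam := by linarith
  have kpos : ∀ m : ℤ, 0 < k m := fun m => by
    rw [hk]; exact mul_pos hk₀ (zpow_pos hlam0 m)
  have kstep : ∀ m : ℤ, k (m + 1) = lam * k m := fun m => by
    rw [hk, hk, zpow_add_one₀ (ne_of_gt hlam0)]; ring
  set c : ℝ := (|a| + |b|) * lam + 1 with hc
  have hc0 : 0 < c := by positivity
  have hac : |a| ≤ c := by
    have := abs_nonneg a; have := abs_nonneg b; nlinarith
  have hbc : |b| * lam ≤ c := by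
    have := abs_nonneg a; have := abs_nonneg b; nlinarith
  refine ⟨4 * c, by positivity, ?_⟩
  intro u v hu0 hv0 hus hvs
  set Su : ℝ := ∑' n : ℕ, k ((n : ℤ) + 1) ^ 2 * ‖u ((n : ℤ) + 1)‖ ^ 2 with hSu
  set Sv : ℝ := ∑' n : ℕ, ‖v ((n : ℤ) + 1)‖ ^ 2 with hSv
  have hSu0 : 0 ≤ Su := tsum_nonneg fun n => by positivity
  have hSv0 : 0 ≤ Sv := tsum_nonneg fun n => by positivity
  -- pointwise bound on k m * ‖u m‖
  have hku : ∀ m : ℤ, k m * ‖u m‖ ≤ Real.sqrt Su := by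
    intro m
    by_cases hm : m ≤ 0
    · rw [hu0 m hm]; simp [Real.sqrt_nonneg]
    · push_neg at hm
      have hmn : ((m - 1).toNat : ℤ) + 1 = m := by omega
      have h2 : k m ^ 2 * ‖u m‖ ^ 2 ≤ Su := by
        rw [← hmn]
        exact Summable.le_tsum hus (m - 1).toNat fun j _ => by positivity
      have hknn : 0 ≤ k m * ‖u m‖ := mul_nonneg (kpos m).le (norm_nonneg _)
      rw [show k m * ‖u m‖ = Real.sqrt ((k m * ‖u m‖) ^ 2) from (Real.sqrt_sq hknn).symm]
      apply Real.sqrt_le_sqrt; nlinarith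
  have hvb : ∀ m : ℤ, ‖v m‖ ^ 2 ≤ Sv := by
    intro m
    by_cases hm : m ≤ 0
    · rw [hv0 m hm]; simpa using hSv0
    · push_neg at hm
      have hmn : ((m - 1).toNat : ℤ) + 1 = m := by omega
      rw [← hmn]
      exact Summable.le_tsum hvs (m - 1).toNat fun j _ => by positivity
  set B : ℕ → ℂ := fun n =>
    -Complex.I *
      (((a * k ((n : ℤ) + 2) : ℝ) : ℂ) * (starRingEnd ℂ) (u ((n : ℤ) + 2)) * v ((n : ℤ) + 3) +
       ((b * k ((n : ℤ) + 1) : ℝ) : ℂ) * (starRingEnd ℂ) (u (n : ℤ)) * v ((n : ℤ) + 2) +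
       ((a * k (n : ℤ) : ℝ) : ℂ) * u (n : ℤ) * v ((n : ℤ) - 1) +
       ((b * k (n : ℤ) : ℝ) : ℂ) * u ((n : ℤ) - 1) * v (n : ℤ)) with hB
  have key : ∀ n : ℕ, ‖B n‖ ≤ c * Real.sqrt Su *
      (‖v ((n : ℤ) + 3)‖ + ‖v ((n : ℤ) + 2)‖ + ‖v ((n : ℤ) - 1)‖ + ‖v (n : ℤ)‖) := by
    intro n
    have h1 : ‖(((a * k ((n : ℤ) + 2) : ℝ) : ℂ) * (starRingEnd ℂ) (u ((n : ℤ) + 2)) * v ((n : ℤ) + 3))‖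
        ≤ c * Real.sqrt Su * ‖v ((n : ℤ) + 3)‖ := by
      rw [norm_mul, norm_mul, Complex.norm_real, RCLike.norm_conj, Real.norm_eq_abs, abs_mul,
        abs_of_pos (kpos _)]
      have := hku ((n : ℤ) + 2)
      have hsq := Real.sqrt_nonneg Su
      nlinarith [norm_nonneg (v ((n : ℤ) + 3)), norm_nonneg (u ((n : ℤ) + 2)),
        (kpos ((n : ℤ) + 2)).le, abs_nonneg a,
        mul_le_mul hac this (mul_nonneg (kpos _).le (norm_nonneg _)) hc0.le,
        mul_le_mul_of_nonneg_right (mul_le_mul hac this (mul_nonneg (kpos _).le (norm_nonneg _)) hc0.le) (norm_nonneg (v ((n : ℤ) + 3)))]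
    have h2 : ‖(((b * k ((n : ℤ) + 1) : ℝ) : ℂ) * (starRingEnd ℂ) (u (n : ℤ)) * v ((n : ℤ) + 2))‖
        ≤ c * Real.sqrt Su * ‖v ((n : ℤ) + 2)‖ := by
      rw [norm_mul, norm_mul, Complex.norm_real, RCLike.norm_conj, Real.norm_eq_abs, abs_mul,
        abs_of_pos (kpos _), kstep (n : ℤ)]
      have hku' := hku (n : ℤ)
      have h' : |b| * (lam * k (n : ℤ)) * ‖u (n : ℤ)‖ ≤ c * Real.sqrt Su := by
        have : |b| * lam * (k (n : ℤ) * ‖u (n : ℤ)‖) ≤ c * Real.sqrt Su :=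
          mul_le_mul hbc hku' (mul_nonneg (kpos _).le (norm_nonneg _)) hc0.le
        nlinarith
      exact (mul_le_mul_of_nonneg_right h' (norm_nonneg _))
    have h3 : ‖(((a * k (n : ℤ) : ℝ) : ℂ) * u (n : ℤ) * v ((n : ℤ) - 1))‖
        ≤ c * Real.sqrt Su * ‖v ((n : ℤ) - 1)‖ := by
      rw [norm_mul, norm_mul, Complex.norm_real, Real.norm_eq_abs, abs_mul, abs_of_pos (kpos _)]
      have h' : |a| * k (n : ℤ) * ‖u (n : ℤ)‖ ≤ c * Real.sqrt Su := by
        have : |a| * (k (n : ℤ) * ‖u (n : ℤ)‖) ≤ c * Real.sqrt Su :=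
          mul_le_mul hac (hku (n : ℤ)) (mul_nonneg (kpos _).le (norm_nonneg _)) hc0.le
        nlinarith
      exact mul_le_mul_of_nonneg_right h' (norm_nonneg _)
    have h4 : ‖(((b * k (n : ℤ) : ℝ) : ℂ) * u ((n : ℤ) - 1) * v (n : ℤ))‖
        ≤ c * Real.sqrt Su * ‖v (n : ℤ)‖ := by
      rw [norm_mul, norm_mul, Complex.norm_real, Real.norm_eq_abs, abs_mul, abs_of_pos (kpos _)]
      have hks : k (n : ℤ) = lam * k ((n : ℤ) - 1) := by
        have := kstep ((n : ℤ) - 1); simpa using this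
      rw [hks]
      have h' : |b| * (lam * k ((n : ℤ) - 1)) * ‖u ((n : ℤ) - 1)‖ ≤ c * Real.sqrt Su := by
        have : |b| * lam * (k ((n : ℤ) - 1) * ‖u ((n : ℤ) - 1)‖) ≤ c * Real.sqrt Su :=
          mul_le_mul hbc (hku _) (mul_nonneg (kpos _).le (norm_nonneg _)) hc0.le
        nlinarith
      exact mul_le_mul_of_nonneg_right h' (norm_nonneg _)
    calc ‖B n‖ = ‖(((a * k ((n : ℤ) + 2) : ℝ) : ℂ) * (starRingEnd ℂ) (u ((n : ℤ) + 2)) * v ((n : ℤ) + 3) +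
             ((b * k ((n : ℤ) + 1) : ℝ) : ℂ) * (starRingEnd ℂ) (u (n : ℤ)) * v ((n : ℤ) + 2) +
             ((a * k (n : ℤ) : ℝ) : ℂ) * u (n : ℤ) * v ((n : ℤ) - 1) +
             ((b * k (n : ℤ) : ℝ) : ℂ) * u ((n : ℤ) - 1) * v (n : ℤ))‖ := by
          rw [hB]; simp [norm_mul]
      _ ≤ _ := by
          refine le_trans (norm_add_le _ _) ?_
          refine le_trans (add_le_add (le_trans (norm_add_le _ _)
            (add_le_add (le_trans (norm_add_le _ _) (add_le_add h1 h2)) h3)) h4) ?_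
          exact le_of_eq (by ring)

  set g : ℕ → ℝ := fun n =>
    ‖v ((n : ℤ) + 3)‖ ^ 2 + ‖v ((n : ℤ) + 2)‖ ^ 2 + ‖v ((n : ℤ) - 1)‖ ^ 2 + ‖v (n : ℤ)‖ ^ 2
    with hg' 
  have hg1 : Summable fun n : ℕ => ‖v ((n : ℤ) + 3)‖ ^ 2 :=
    ((summable_nat_add_iff 2).2 hvs).congr fun n => by push_cast; ring_nf
  have hg2 : Summable fun n : ℕ => ‖v ((n : ℤ) + 2)‖ ^ 2 :=
    ((summable_nat_add_iff 1).2 hvs).congr fun n => by push_cast; ring_nf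
  have hg3 : Summable fun n : ℕ => ‖v ((n : ℤ) - 1)‖ ^ 2 :=
    (summable_nat_add_iff 2).mp (hvs.congr fun n => by push_cast; ring_nf)
  have hg4 : Summable fun n : ℕ => ‖v (n : ℤ)‖ ^ 2 :=
    (summable_nat_add_iff 1).mp (hvs.congr fun n => by push_cast; ring_nf)
  have hg : Summable g := ((hg1.add hg2).add hg3).add hg4
  have hbound : ∀ n : ℕ, ‖B n‖ ^ 2 ≤ 4 * c ^ 2 * Su * g n := by
    intro n
    have hkn := key n
    calc ‖B n‖ ^ 2
        ≤ (c * Real.sqrt Su *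
            (‖v ((n : ℤ) + 3)‖ + ‖v ((n : ℤ) + 2)‖ + ‖v ((n : ℤ) - 1)‖ + ‖v (n : ℤ)‖)) ^ 2 :=
          pow_le_pow_left₀ (norm_nonneg _) hkn 2
      _ = c ^ 2 * Su *
            (‖v ((n : ℤ) + 3)‖ + ‖v ((n : ℤ) + 2)‖ + ‖v ((n : ℤ) - 1)‖ + ‖v (n : ℤ)‖) ^ 2 := by
          rw [mul_pow, mul_pow, Real.sq_sqrt hSu0]
      _ ≤ c ^ 2 * Su * (4 * (‖v ((n : ℤ) + 3)‖ ^ 2 + ‖v ((n : ℤ) + 2)‖ ^ 2 +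
            ‖v ((n : ℤ) - 1)‖ ^ 2 + ‖v (n : ℤ)‖ ^ 2)) :=
          mul_le_mul_of_nonneg_left (four_sq_aux _ _ _ _) (by positivity)
      _ = 4 * c ^ 2 * Su * g n := by rw [hg']; ring
  have hBsum : Summable fun n : ℕ => ‖B n‖ ^ 2 :=
    Summable.of_nonneg_of_le (fun n => sq_nonneg _) hbound (hg.mul_left (4 * c ^ 2 * Su))
  refine ⟨hBsum, ?_⟩
  have hT1 : (∑' n : ℕ, ‖v ((n : ℤ) + 3)‖ ^ 2) ≤ Sv := by
    have e := Summable.sum_add_tsum_nat_add (f := fun n : ℕ => ‖v ((n : ℤ) + 1)‖ ^ 2) 2 hvs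
    have e2 : (∑' n : ℕ, ‖v (((n + 2 : ℕ) : ℤ) + 1)‖ ^ 2) = ∑' n : ℕ, ‖v ((n : ℤ) + 3)‖ ^ 2 :=
      tsum_congr fun n => by push_cast; ring_nf
    have hnn : (0:ℝ) ≤ ∑ i ∈ Finset.range 2, ‖v ((i : ℤ) + 1)‖ ^ 2 :=
      Finset.sum_nonneg fun i _ => sq_nonneg _
    rw [hSv]; rw [e2] at e; linarith
  have hT2 : (∑' n : ℕ, ‖v ((n : ℤ) + 2)‖ ^ 2) ≤ Sv := by
    have e := Summable.sum_add_tsum_nat_add (f := fun n : ℕ => ‖v ((n : ℤ) + 1)‖ ^ 2) 1 hvs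
    have e2 : (∑' n : ℕ, ‖v (((n + 1 : ℕ) : ℤ) + 1)‖ ^ 2) = ∑' n : ℕ, ‖v ((n : ℤ) + 2)‖ ^ 2 :=
      tsum_congr fun n => by push_cast; ring_nf
    have hnn : (0:ℝ) ≤ ∑ i ∈ Finset.range 1, ‖v ((i : ℤ) + 1)‖ ^ 2 :=
      Finset.sum_nonneg fun i _ => sq_nonneg _
    rw [hSv]; rw [e2] at e; linarith
  have hT3 : (∑' n : ℕ, ‖v ((n : ℤ) - 1)‖ ^ 2) ≤ Sv := by
    have e := Summable.sum_add_tsum_nat_add (f := fun n : ℕ => ‖v ((n : ℤ) - 1)‖ ^ 2) 2 hg3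
    have e2 : (∑' n : ℕ, ‖v (((n + 2 : ℕ) : ℤ) - 1)‖ ^ 2) = ∑' n : ℕ, ‖v ((n : ℤ) + 1)‖ ^ 2 :=
      tsum_congr fun n => by push_cast; ring_nf
    have h0 : (∑ i ∈ Finset.range 2, ‖v ((i : ℤ) - 1)‖ ^ 2) = 0 := by
      simp [Finset.sum_range_succ, hv0 (-1) (by norm_num), hv0 0 le_rfl]
    rw [hSv]; rw [e2, h0] at e; linarith
  have hT4 : (∑' n : ℕ, ‖v (n : ℤ)‖ ^ 2) ≤ Sv := by
    have e := Summable.sum_add_tsum_nat_add (f := fun n : ℕ => ‖v (n : ℤ)‖ ^ 2) 1 hg4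
    have e2 : (∑' n : ℕ, ‖v ((n + 1 : ℕ) : ℤ)‖ ^ 2) = ∑' n : ℕ, ‖v ((n : ℤ) + 1)‖ ^ 2 :=
      tsum_congr fun n => by push_cast; ring_nf
    have h0 : (∑ i ∈ Finset.range 1, ‖v ((i : ℕ) : ℤ)‖ ^ 2) = 0 := by
      simp [hv0 0 le_rfl]
    rw [hSv]; rw [e2, h0] at e; linarith
  have hgsum : (∑' n : ℕ, g n) ≤ 4 * Sv := by
    have e : (∑' n : ℕ, g n) = (∑' n : ℕ, ‖v ((n : ℤ) + 3)‖ ^ 2) +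
        (∑' n : ℕ, ‖v ((n : ℤ) + 2)‖ ^ 2) + (∑' n : ℕ, ‖v ((n : ℤ) - 1)‖ ^ 2) +
        (∑' n : ℕ, ‖v (n : ℤ)‖ ^ 2) := by
      rw [hg']
      rw [Summable.tsum_add ((hg1.add hg2).add hg3) hg4, Summable.tsum_add (hg1.add hg2) hg3, Summable.tsum_add hg1 hg2]
    linarith
  calc (∑' n : ℕ, ‖B n‖ ^ 2)
      ≤ ∑' n : ℕ, 4 * c ^ 2 * Su * g n := Summable.tsum_le_tsum hbound hBsum (hg.mul_left _)
    _ = 4 * c ^ 2 * Su * ∑' n : ℕ, g n := tsum_mul_left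
    _ ≤ 4 * c ^ 2 * Su * (4 * Sv) :=
        mul_le_mul_of_nonneg_left hgsum (by positivity)
    _ = (4 * c) ^ 2 * Su * Sv := by ring
end
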